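/- arXiv:2306.06723 — 3 statements merged into one kernel-verified Lean document; each statement's English description precedes it below -/
import Mathlib

section
/- Let f, f' ∈ {0,1}^T with flip(f) ≤ w and flip(f') ≤ w, and suppose |f[t] − f'[t]| ≤ 1 for all t. Fix a level ℓ with 2^ℓ dividing T and define G, G' as the level-ℓ difference vectors G[i] = f[i·2^ℓ] − f[(i−1)·2^ℓ]. Then ‖G − G'‖₂² ≤ 8(w+1). -/
/-- `flipCountVec f T` counts the indices `j ∈ {1, …, T−1}` with `f j ≠ f (j+1)`. -/
def flipCountVec (f : ℕ → ℤ) (T : ℕ) : ℕ :=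
  ((Finset.Icc 1 (T - 1)).filter (fun j => f j ≠ f (j + 1))).card

/-- Let `f, f' ∈ {0,1}^T` (with `f 0 = f' 0 = 0` by convention) have flippancy at most `w`,
and `|f t − f' t| ≤ 1` for all `t`. Fix a level `ℓ` with `2^ℓ ∣ T` and define the level-`ℓ`
difference vectors `G[i] = f[i·2^ℓ] − f[(i−1)·2^ℓ]` (similarly `G'`).
Then `‖G − G'‖₂² ≤ 8(w+1)`. -/
theorem level_diff_l2 (T w m ℓ : ℕ) (hT : T = 2 ^ m) (hdvd : 2 ^ ℓ ∣ T)
    (f f' : ℕ → ℤ)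
    (hf01 : ∀ t, f t = 0 ∨ f t = 1) (hf'01 : ∀ t, f' t = 0 ∨ f' t = 1)
    (hf0 : f 0 = 0) (hf'0 : f' 0 = 0)
    (hclose : ∀ t, |f t - f' t| ≤ 1)
    (hw : flipCountVec f T ≤ w) (hw' : flipCountVec f' T ≤ w) :
    (∑ i ∈ Finset.Icc 1 (T / 2 ^ ℓ),
        ((f (i * 2 ^ ℓ) - f ((i - 1) * 2 ^ ℓ))
          - (f' (i * 2 ^ ℓ) - f' ((i - 1) * 2 ^ ℓ))) ^ 2) ≤ 8 * (w + 1) := by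
  classical
  set B := 2 ^ ℓ with hB
  set N := T / B with hN
  have hNB : N * B = T := Nat.div_mul_cancel hdvd
  set D : ℕ → ℤ := fun t => f t - f' t with hDdef
  -- chain equality lemma
  have eqchain : ∀ a b : ℕ, a ≤ b → (∀ j, a ≤ j → j < b → D j = D (j + 1)) → D a = D b := by
    intro a b hab
    induction b, hab using Nat.le_induction with
    | base => intro _; rfl
    | succ b hb ih =>
      intro h
      have h1 := ih (fun j hj1 hj2 => h j hj1 (Nat.lt_succ_of_lt hj2))
      rw [h1, h b hb (Nat.lt_succ_self b)]
  have tele : ∀ a b : ℕ, a ≤ b → D a ≠ D b → ∃ j, a ≤ j ∧ j < b ∧ D j ≠ D (j + 1) := by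
    intro a b hab hne
    by_contra hcon
    push_neg at hcon
    exact hne (eqchain a b hab (fun j hj1 hj2 => hcon j hj1 hj2))
  set S : Finset ℕ := (Finset.Icc 1 N).filter (fun i => D (i * B) ≠ D ((i - 1) * B)) with hS
  -- choose witnesses
  have key : ∀ i : ℕ, ∃ j, i ∈ S → ((i - 1) * B ≤ j ∧ j < i * B ∧ D j ≠ D (j + 1)) := by
    intro i
    by_cases h : i ∈ S
    · obtain ⟨hmem, hne⟩ := Finset.mem_filter.1 h
      have hle : (i - 1) * B ≤ i * B := Nat.mul_le_mul_right _ (Nat.sub_le i 1)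
      obtain ⟨j, hj1, hj2, hj3⟩ := tele _ _ hle (fun e => hne e.symm)
      exact ⟨j, fun _ => ⟨hj1, hj2, hj3⟩⟩
    · exact ⟨0, fun hm => absurd hm h⟩
  choose g hg using key
  set Tset : Finset ℕ := (Finset.range T).filter (fun j => D j ≠ D (j + 1)) with hTset
  have cardS : S.card ≤ Tset.card := by
    apply Finset.card_le_card_of_injOn g
    · intro i hi
      obtain ⟨h1, h2, h3⟩ := hg i hi
      obtain ⟨hmem, _⟩ := Finset.mem_filter.1 hi
      obtain ⟨hi1, hi2⟩ := Finset.mem_Icc.1 hmem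
      refine Finset.mem_filter.2 ⟨Finset.mem_range.2 ?_, h3⟩
      calc g i < i * B := h2
        _ ≤ N * B := Nat.mul_le_mul_right _ hi2
        _ = T := hNB
    · intro i1 h1 i2 h2 heq
      obtain ⟨ha1, ha2, _⟩ := hg i1 h1
      obtain ⟨hb1, hb2, _⟩ := hg i2 h2
      rcases lt_trichotomy i1 i2 with h | h | h
      · exfalso
        have : i1 ≤ i2 - 1 := Nat.le_sub_one_of_lt h
        have : i1 * B ≤ (i2 - 1) * B := Nat.mul_le_mul_right _ this
        omega
      · exact h
      · exfalso
        have : i2 ≤ i1 - 1 := Nat.le_sub_one_of_lt h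
        have : i2 * B ≤ (i1 - 1) * B := Nat.mul_le_mul_right _ this
        omega
  -- Tset.card ≤ 1 + 2w
  have cardT : Tset.card ≤ 1 + (w + w) := by
    have hsub : Tset ⊆ insert 0
        (((Finset.Icc 1 (T - 1)).filter (fun j => f j ≠ f (j + 1))) ∪
         ((Finset.Icc 1 (T - 1)).filter (fun j => f' j ≠ f' (j + 1)))) := by
      intro j hj
      obtain ⟨hjr, hjne⟩ := Finset.mem_filter.1 hj
      have hjT := Finset.mem_range.1 hjr
      by_cases hj0 : j = 0
      · exact Finset.mem_insert.2 (Or.inl hj0)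
      · refine Finset.mem_insert.2 (Or.inr ?_)
        have hjIcc : j ∈ Finset.Icc 1 (T - 1) :=
          Finset.mem_Icc.2 ⟨Nat.one_le_iff_ne_zero.2 hj0, Nat.le_sub_one_of_lt hjT⟩
        by_cases hf : f j = f (j + 1)
        · refine Finset.mem_union.2 (Or.inr (Finset.mem_filter.2 ⟨hjIcc, ?_⟩))
          intro hf'
          exact hjne (by simp only [hDdef]; rw [hf, hf'])
        · exact Finset.mem_union.2 (Or.inl (Finset.mem_filter.2 ⟨hjIcc, hf⟩))
    have h1 := Finset.card_le_card hsub
    have h2 := Finset.card_insert_le 0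
      (((Finset.Icc 1 (T - 1)).filter (fun j => f j ≠ f (j + 1))) ∪
       ((Finset.Icc 1 (T - 1)).filter (fun j => f' j ≠ f' (j + 1))))
    have h3 := Finset.card_union_le
      ((Finset.Icc 1 (T - 1)).filter (fun j => f j ≠ f (j + 1)))
      ((Finset.Icc 1 (T - 1)).filter (fun j => f' j ≠ f' (j + 1)))
    have hw2 : flipCountVec f T ≤ w := hw
    have hw2' : flipCountVec f' T ≤ w := hw'
    unfold flipCountVec at hw2 hw2'
    omega
  have hScard : S.card ≤ 1 + (w + w) := le_trans cardS cardT
  -- sum over nonzero terms only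
  have hsum : (∑ i ∈ Finset.Icc 1 N,
      ((f (i * B) - f ((i - 1) * B)) - (f' (i * B) - f' ((i - 1) * B))) ^ 2)
      = ∑ i ∈ S, ((f (i * B) - f ((i - 1) * B)) - (f' (i * B) - f' ((i - 1) * B))) ^ 2 := by
    rw [hS]
    rw [Finset.sum_filter_of_ne]
    intro i hi hne
    intro hc
    apply hne
    have hz : (f (i * B) - f ((i - 1) * B)) - (f' (i * B) - f' ((i - 1) * B)) = 0 := by
      simp only [hDdef] at hc; linarith
    rw [hz]; ring
  have hbound : (∑ i ∈ S,
      ((f (i * B) - f ((i - 1) * B)) - (f' (i * B) - f' ((i - 1) * B))) ^ 2)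
      ≤ ∑ _i ∈ S, (4 : ℤ) := by
    apply Finset.sum_le_sum
    intro i _
    have h1 := abs_le.1 (hclose (i * B))
    have h2 := abs_le.1 (hclose ((i - 1) * B))
    nlinarith [h1.1, h1.2, h2.1, h2.2]
  have hconst : (∑ _i ∈ S, (4 : ℤ)) = 4 * S.card := by
    rw [Finset.sum_const, nsmul_eq_mul]; ring
  have hfin : (4 : ℤ) * S.card ≤ 8 * (w + 1) := by
    have : (S.card : ℤ) ≤ 1 + (w + w) := by exact_mod_cast hScard
    linarith
  calc (∑ i ∈ Finset.Icc 1 (T / 2 ^ ℓ),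
        ((f (i * 2 ^ ℓ) - f ((i - 1) * 2 ^ ℓ))
          - (f' (i * 2 ^ ℓ) - f' ((i - 1) * 2 ^ ℓ))) ^ 2)
      = ∑ i ∈ S, ((f (i * B) - f ((i - 1) * B)) - (f' (i * B) - f' ((i - 1) * B))) ^ 2 := hsum
    _ ≤ ∑ _i ∈ S, (4 : ℤ) := hbound
    _ = 4 * S.card := hconst
    _ ≤ 8 * (w + 1) := hfin
end

section
/- Gaussian mechanism privacy: let f : X^n → ℝ^k have ℓ₂-sensitivity at most Δ₂, i.e., ‖f(y) − f(y')‖₂ ≤ Δ₂ for all neighboring y, y'. The mechanism releasing f(y) + N(0, σ²I_k) is (Δ₂²/(2σ²))-zCDP. -/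
open MeasureTheory
open scoped NNReal ENNReal

/-- The Rényi divergence of order `ξ` between measures `Q` and `Q'`:
`D_ξ(Q‖Q') = (1/(ξ−1))·log ∫ (dQ/dQ')^ξ dQ'`. -/
noncomputable def renyiDiv {Ω : Type*} [MeasurableSpace Ω] (ξ : ℝ)
    (Q Q' : Measure Ω) : ℝ :=
  (ξ - 1)⁻¹ * Real.log (∫ r, ((Q.rnDeriv Q' r).toReal) ^ ξ ∂Q')

/-- A randomized map `M` is `ρ`-zCDP: for all neighboring inputs and all orders
`ξ ∈ (1,∞)`, the `ξ`-Rényi divergence between output distributions is at most `ξρ`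
in both directions. -/
def IsZCDP {X Ω : Type*} [MeasurableSpace Ω] (Neighbor : X → X → Prop)
    (M : X → Measure Ω) (ρ : ℝ) : Prop :=
  ∀ y y', Neighbor y y' → ∀ ξ : ℝ, 1 < ξ →
    renyiDiv ξ (M y) (M y') ≤ ξ * ρ ∧ renyiDiv ξ (M y') (M y) ≤ ξ * ρ

open ProbabilityTheory

theorem my_lintegral_pi_prod {n : ℕ} {E : Type*} [MeasurableSpace E]
    (μ : Fin n → Measure E) [∀ i, SigmaFinite (μ i)] (g : Fin n → E → ℝ≥0∞)
    (hg : ∀ i, Measurable (g i)) :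
    ∫⁻ x, ∏ i, g i (x i) ∂Measure.pi μ = ∏ i, ∫⁻ x, g i x ∂μ i := by
  induction n with
  | zero => simp [Measure.pi_of_empty μ]
  | succ n ih =>
    have h := (measurePreserving_piFinSuccAbove μ 0).symm
    rw [← h.lintegral_comp_emb
      (MeasurableEquiv.piFinSuccAbove (fun _ : Fin (n+1) => E) 0).symm.measurableEmbedding]
    simp_rw [MeasurableEquiv.piFinSuccAbove_symm_apply, Fin.insertNthEquiv,
      Fin.prod_univ_succ, Fin.insertNth_zero]
    simp only [Fin.zero_succAbove, Function.comp_def, Fin.cons_zero, Fin.cons_succ,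
      Equiv.coe_fn_mk, cast_eq]
    have hm : Measurable fun (x : Fin n → E) => ∏ j, g j.succ (x j) :=
      Finset.measurable_prod _ fun j _ => (hg j.succ).comp (measurable_pi_apply j)
    rw [lintegral_prod_mul (hg 0).aemeasurable hm.aemeasurable,
      ih (fun j => μ j.succ) (fun j => g j.succ) (fun j => hg j.succ)]

theorem my_integral_pi_prod {n : ℕ} {E : Type*} [MeasurableSpace E]
    (μ : Fin n → Measure E) [∀ i, SigmaFinite (μ i)] (g : Fin n → E → ℝ) :
    ∫ x, ∏ i, g i (x i) ∂Measure.pi μ = ∏ i, ∫ x, g i x ∂μ i := by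
  induction n with
  | zero => simp [Measure.pi_of_empty μ]
  | succ n ih =>
    have h := (measurePreserving_piFinSuccAbove μ 0).symm
    rw [← h.integral_comp']
    simp_rw [MeasurableEquiv.piFinSuccAbove_symm_apply, Fin.insertNthEquiv,
      Fin.prod_univ_succ, Fin.insertNth_zero]
    simp only [Fin.zero_succAbove, Function.comp_def, Fin.cons_zero, Fin.cons_succ,
      Equiv.coe_fn_mk, cast_eq]
    rw [integral_prod_mul (g 0) (fun (y : Fin n → E) => ∏ j, g j.succ (y j)),
      ih (fun j => μ j.succ) (fun j => g j.succ)]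

theorem my_pi_withDensity {n : ℕ} {E : Type*} [MeasurableSpace E]
    (μ : Fin n → Measure E) [∀ i, SigmaFinite (μ i)] (g : Fin n → E → ℝ≥0∞)
    (hg : ∀ i, Measurable (g i)) [∀ i, SigmaFinite ((μ i).withDensity (g i))] :
    Measure.pi (fun i => (μ i).withDensity (g i))
      = (Measure.pi μ).withDensity (fun x => ∏ i, g i (x i)) := by
  refine Measure.pi_eq fun s hs => ?_
  rw [withDensity_apply _ (MeasurableSet.univ_pi hs),
    ← lintegral_indicator (MeasurableSet.univ_pi hs)]
  have key : ∀ x : Fin n → E, (Set.univ.pi s).indicator (fun x => ∏ i, g i (x i)) x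
      = ∏ i, (s i).indicator (g i) (x i) := by
    intro x
    by_cases hx : x ∈ Set.univ.pi s
    · rw [Set.indicator_of_mem hx]
      exact Finset.prod_congr rfl fun i _ =>
        (Set.indicator_of_mem (hx i trivial) _).symm
    · rw [Set.indicator_of_notMem hx]
      simp only [Set.mem_pi, Set.mem_univ, forall_true_left, not_forall] at hx
      obtain ⟨i, hi⟩ := hx
      exact (Finset.prod_eq_zero (Finset.mem_univ i) (Set.indicator_of_notMem hi _)).symm
  simp_rw [key]
  rw [my_lintegral_pi_prod μ _ (fun i => (hg i).indicator (hs i))]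
  exact Finset.prod_congr rfl fun i _ => by
    rw [lintegral_indicator (hs i), withDensity_apply _ (hs i)]

lemma gauss_ratio (m m' : ℝ) {v : ℝ≥0} (hv : v ≠ 0) (x : ℝ) :
    gaussianPDFReal m v x / gaussianPDFReal m' v x
      = Real.exp ((x - m') ^ 2 / (2 * v) - (x - m) ^ 2 / (2 * v)) := by
  have hV : (0:ℝ) < (v:ℝ) := by positivity
  have hc : (Real.sqrt (2 * Real.pi * v))⁻¹ ≠ 0 := by positivity
  simp only [gaussianPDFReal]
  rw [mul_div_mul_left _ _ hc, ← Real.exp_sub]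
  congr 1
  ring

lemma gauss_pow_mul (m m' ξ : ℝ) {v : ℝ≥0} (hv : v ≠ 0) (x : ℝ) :
    (gaussianPDFReal m v x / gaussianPDFReal m' v x) ^ ξ * gaussianPDFReal m' v x
      = Real.exp (ξ * (ξ - 1) * (m - m') ^ 2 / (2 * v)) *
        gaussianPDFReal (m' + ξ * (m - m')) v x := by
  have hV : (0:ℝ) < (v:ℝ) := by positivity
  rw [gauss_ratio m m' hv, Real.rpow_def_of_pos (Real.exp_pos _), Real.log_exp]
  simp only [gaussianPDFReal]
  have h1 : ∀ a b : ℝ, Real.exp a * ((Real.sqrt (2 * Real.pi * v))⁻¹ * Real.exp b)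
      = (Real.sqrt (2 * Real.pi * v))⁻¹ * Real.exp (a + b) := by
    intro a b; rw [Real.exp_add]; ring
  rw [h1, h1]
  congr 1
  field_simp
  ring

lemma gauss_renyi_integral (m m' ξ : ℝ) {v : ℝ≥0} (hv : v ≠ 0) :
    ∫ x, (gaussianPDFReal m v x / gaussianPDFReal m' v x) ^ ξ ∂(gaussianReal m' v)
      = Real.exp (ξ * (ξ - 1) * (m - m') ^ 2 / (2 * v)) := by
  rw [gaussianReal_of_var_ne_zero m' hv,
    show gaussianPDF m' v = fun x => ((Real.toNNReal (gaussianPDFReal m' v x)) : ℝ≥0∞) from rfl,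
    integral_withDensity_eq_integral_smul (measurable_gaussianPDFReal m' v).real_toNNReal _]
  simp only [NNReal.smul_def, Real.coe_toNNReal _ (gaussianPDFReal_nonneg m' v _), smul_eq_mul]
  simp_rw [mul_comm (gaussianPDFReal m' v _), gauss_pow_mul m m' ξ hv]
  rw [MeasureTheory.integral_const_mul, integral_gaussianPDFReal_eq_one _ hv, mul_one]

lemma pi_gauss_translate {k : ℕ} (c : Fin k → ℝ) (v : ℝ≥0) :
    Measure.pi (fun i => gaussianReal (c i) v)
      = (Measure.pi fun _ : Fin k => gaussianReal 0 v).map (fun g i => c i + g i) := by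
  have hT : Measurable (fun (g : Fin k → ℝ) i => c i + g i) :=
    measurable_pi_lambda _ fun i => measurable_const.add (measurable_pi_apply i)
  refine Measure.pi_eq fun s hs => ?_
  rw [Measure.map_apply hT (MeasurableSet.univ_pi hs)]
  have hpre : (fun (g : Fin k → ℝ) i => c i + g i) ⁻¹' Set.univ.pi s
      = Set.univ.pi (fun i => (fun x => c i + x) ⁻¹' s i) := by
    ext g; simp [Set.mem_pi]
  rw [hpre, Measure.pi_pi]
  refine Finset.prod_congr rfl fun i _ => ?_
  rw [← Measure.map_apply (measurable_const_add (c i)) (hs i),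
    gaussianReal_map_const_add, zero_add]

lemma renyi_gauss_eq {k : ℕ} (μ μ' : Fin k → ℝ) {v : ℝ≥0} (hv : v ≠ 0) {ξ : ℝ} (hξ : 1 < ξ) :
    renyiDiv ξ (Measure.pi fun i => gaussianReal (μ i) v)
        (Measure.pi fun i => gaussianReal (μ' i) v)
      = ξ * ((∑ i, (μ i - μ' i) ^ 2) / (2 * v)) := by
  set g : Fin k → ℝ → ℝ≥0∞ := fun i x =>
    ENNReal.ofReal (gaussianPDFReal (μ i) v x / gaussianPDFReal (μ' i) v x) with hgdef
  have hgm : ∀ i, Measurable (g i) := fun i =>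
    ((measurable_gaussianPDFReal _ _).div (measurable_gaussianPDFReal _ _)).ennreal_ofReal
  have hstep : ∀ i, gaussianReal (μ i) v = (gaussianReal (μ' i) v).withDensity (g i) := by
    intro i
    rw [gaussianReal_of_var_ne_zero _ hv, gaussianReal_of_var_ne_zero _ hv,
      ← withDensity_mul _ (measurable_gaussianPDF _ _) (hgm i)]
    congr 1
    funext x
    have hne : gaussianPDFReal (μ' i) v x ≠ 0 := (gaussianPDFReal_pos _ _ _ hv).ne'
    simp only [Pi.mul_apply, gaussianPDF, hgdef]
    rw [← ENNReal.ofReal_mul (gaussianPDFReal_nonneg _ _ _)]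
    congr 1
    rw [mul_comm, div_mul_cancel₀ _ hne]
  haveI : ∀ i, SigmaFinite ((gaussianReal (μ' i) v).withDensity (g i)) :=
    fun i => (hstep i) ▸ inferInstance
  have hQ : Measure.pi (fun i => gaussianReal (μ i) v)
      = (Measure.pi (fun i => gaussianReal (μ' i) v)).withDensity
          (fun x => ∏ i, g i (x i)) := by
    calc Measure.pi (fun i => gaussianReal (μ i) v)
        = Measure.pi (fun i => (gaussianReal (μ' i) v).withDensity (g i)) := by
          congr 1; funext i; exact hstep i
      _ = _ := my_pi_withDensity _ _ hgm
  have hH : Measurable fun x : Fin k → ℝ => ∏ i, g i (x i) :=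
    Finset.measurable_prod _ fun i _ => (hgm i).comp (measurable_pi_apply i)
  have hrn : (Measure.pi (fun i => gaussianReal (μ i) v)).rnDeriv
        (Measure.pi fun i => gaussianReal (μ' i) v)
      =ᵐ[Measure.pi fun i => gaussianReal (μ' i) v] fun x => ∏ i, g i (x i) := by
    rw [hQ]; exact Measure.rnDeriv_withDensity _ hH
  rw [renyiDiv]
  have hint : ∫ r, (((Measure.pi (fun i => gaussianReal (μ i) v)).rnDeriv
        (Measure.pi fun i => gaussianReal (μ' i) v) r).toReal) ^ ξ
        ∂(Measure.pi fun i => gaussianReal (μ' i) v)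
      = ∫ r, ∏ i, (gaussianPDFReal (μ i) v (r i) / gaussianPDFReal (μ' i) v (r i)) ^ ξ
        ∂(Measure.pi fun i => gaussianReal (μ' i) v) := by
    refine integral_congr_ae (hrn.mono fun x hx => ?_)
    simp only
    rw [hx, ENNReal.toReal_prod,
      ← Real.finset_prod_rpow _ _ (fun i _ => ENNReal.toReal_nonneg) ξ]
    refine Finset.prod_congr rfl fun i _ => ?_
    rw [hgdef, ENNReal.toReal_ofReal
      (div_nonneg (gaussianPDFReal_nonneg _ _ _) (gaussianPDFReal_nonneg _ _ _))]
  rw [hint, my_integral_pi_prod (fun i => gaussianReal (μ' i) v)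
    (fun i x => (gaussianPDFReal (μ i) v x / gaussianPDFReal (μ' i) v x) ^ ξ)]
  have hprod : ∏ i, ∫ x, (gaussianPDFReal (μ i) v x / gaussianPDFReal (μ' i) v x) ^ ξ
        ∂(gaussianReal (μ' i) v)
      = Real.exp (∑ i, ξ * (ξ - 1) * (μ i - μ' i) ^ 2 / (2 * v)) := by
    rw [Real.exp_sum]
    exact Finset.prod_congr rfl fun i _ => gauss_renyi_integral _ _ _ hv
  rw [hprod, Real.log_exp]
  have hξ0 : ξ - 1 ≠ 0 := sub_ne_zero.mpr hξ.ne'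
  have hV : (0:ℝ) < (v:ℝ) := by positivity
  rw [← Finset.sum_div, ← Finset.mul_sum]
  field_simp



/-- Gaussian mechanism privacy: if `f : X → ℝ^k` has ℓ₂-sensitivity at most `Δ₂`
(i.e. `‖f(y) − f(y')‖₂ ≤ Δ₂` for all neighbors), then the mechanism releasing
`f(y) + N(0, σ²·I_k)` is `(Δ₂²/(2σ²))`-zCDP. -/
theorem gaussian_mechanism_zcdp {X : Type*} (k : ℕ) (Neighbor : X → X → Prop)
    (f : X → Fin k → ℝ) (Δ : ℝ) (hΔ : 0 ≤ Δ)
    (hsens : ∀ y y', Neighbor y y' → ∑ i, (f y i - f y' i) ^ 2 ≤ Δ ^ 2)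
    (σ : ℝ≥0) (hσ : 0 < σ) :
    IsZCDP Neighbor
      (fun y => (Measure.pi (fun _ : Fin k => gaussianReal 0 (σ ^ 2))).map
        (fun g i => f y i + g i))
      (Δ ^ 2 / (2 * (σ : ℝ) ^ 2)) := by
  intro y y' hn ξ hξ
  have hv : (σ ^ 2 : ℝ≥0) ≠ 0 := pow_ne_zero 2 hσ.ne'
  have key : ∀ a b : X, (∑ i, (f a i - f b i) ^ 2 ≤ Δ ^ 2) →
      renyiDiv ξ ((Measure.pi (fun _ : Fin k => gaussianReal 0 (σ ^ 2))).map
          (fun g i => f a i + g i))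
        ((Measure.pi (fun _ : Fin k => gaussianReal 0 (σ ^ 2))).map
          (fun g i => f b i + g i))
      ≤ ξ * (Δ ^ 2 / (2 * (σ : ℝ) ^ 2)) := by
    intro a b hab
    rw [← pi_gauss_translate, ← pi_gauss_translate, renyi_gauss_eq _ _ hv hξ]
    have hcast : ((σ ^ 2 : ℝ≥0) : ℝ) = (σ : ℝ) ^ 2 := by push_cast; ring
    rw [hcast]
    have hξ0 : (0:ℝ) ≤ ξ := le_of_lt (lt_trans one_pos hξ)
    have hden : (0:ℝ) < 2 * (σ : ℝ) ^ 2 := by positivity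
    gcongr
  refine ⟨key y y' (hsens y y' hn), key y' y ?_⟩
  calc ∑ i, (f y' i - f y i) ^ 2 = ∑ i, (f y i - f y' i) ^ 2 :=
        Finset.sum_congr rfl fun i _ => by ring
    _ ≤ Δ ^ 2 := hsens y y' hn
end

section
/- Scaling reduction for lower bounds: let ℓ ≥ 1 be an integer and suppose M' is a mechanism for CountDistinct on streams of length T' = ℓT over universe [ℓ] × U that is (ε', δ')-item-level-DP and α'-accurate. Construct M on streams x of length T over U by replacing each entry ±u of x with the block of ℓ entries ±(u,1), ..., ±(u,ℓ) (and each ⊥ with ℓ entries ⊥), running M' on the resulting stream x', and outputting M(x)[t] = (1/ℓ)·M'(x')[t·ℓ]. Then: (a) CountDistinct(x')[tℓ] = ℓ·CountDistinct(x)[t] for every t ∈ [T]; (b) if x and x̃ are item-neighbors then x' and x̃' differ in the entries of at most ℓ items; (c) M is (ℓε', δ'·(e^{ℓε'}−1)/(e^{ε'}−1))-item-level-DP and (α'/ℓ)-accurate. -/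
open MeasureTheory
open scoped NNReal ENNReal

/-- Net count of element `u` in stream `x`: insertions minus deletions. -/
def netCount {U : Type*} [DecidableEq U] (x : List (Option (Bool × U))) (u : U) : ℤ :=
  (x.count (some (true, u)) : ℤ) - (x.count (some (false, u)) : ℤ)

/-- `CountDistinct(x)[t]`: the number of elements with strictly positive count in `x[1:t]`. -/
def countDistinct {U : Type*} [Fintype U] [DecidableEq U]
    (x : List (Option (Bool × U))) (t : ℕ) : ℕ :=
  (Finset.univ.filter (fun u : U => 0 < netCount (x.take t) u)).card

/-- `x'` is obtained from `x` by replacing with `⊥` a subset of the entries pertaining to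
a single universe element. -/
def ItemSubNeighbor {U : Type*} (x x' : List (Option (Bool × U))) : Prop :=
  x.length = x'.length ∧ ∃ u : U, ∀ t : ℕ,
    x'.getD t none = x.getD t none ∨
    (x'.getD t none = none ∧ ∃ b : Bool, x.getD t none = some (b, u))

/-- Item-neighboring streams. -/
def ItemNeighbor {U : Type*} (x x' : List (Option (Bool × U))) : Prop :=
  ItemSubNeighbor x x' ∨ ItemSubNeighbor x' x

/-- Replace each entry `±u` of `x` by the block of `ℓ` entries `±(1,u), …, ±(ℓ,u)`,
and each `⊥` by `ℓ` entries `⊥`. -/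
def expand {U : Type*} (ℓ : ℕ) (x : List (Option (Bool × U))) :
    List (Option (Bool × (Fin ℓ × U))) :=
  x.flatMap fun e =>
    match e with
    | none => List.replicate ℓ none
    | some (b, u) => (List.finRange ℓ).map fun m => some (b, (m, u))

/-- `(ε, δ)`-differential privacy of a mechanism with respect to a neighbor relation. -/
def IsDP {X Ω : Type*} [MeasurableSpace Ω] (Neighbor : X → X → Prop)
    (M : X → Measure Ω) (ε δ : ℝ) : Prop :=
  ∀ y y', Neighbor y y' → ∀ S : Set Ω, MeasurableSet S →
    (M y S).toReal ≤ Real.exp ε * (M y' S).toReal + δ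

/-- `α`-accuracy for `CountDistinct` on streams of length `T`: with probability at least
`0.99`, the output vector is within additive `α` of the true distinct count at every
time step `t ∈ [T]`. -/
def Accurate {U : Type*} [Fintype U] [DecidableEq U]
    (M : List (Option (Bool × U)) → Measure (ℕ → ℝ)) (T : ℕ) (α : ℝ) : Prop :=
  ∀ x : List (Option (Bool × U)), x.length = T →
    ENNReal.ofReal 0.99 ≤
      M x {a | ∀ t : ℕ, 1 ≤ t → t ≤ T → |a t - (countDistinct x t : ℝ)| ≤ α}

def blockOf {U : Type*} (ℓ : ℕ) : Option (Bool × U) → List (Option (Bool × (Fin ℓ × U)))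
  | none => List.replicate ℓ none
  | some (b, u) => (List.finRange ℓ).map fun m => some (b, (m, u))

lemma expand_eq {U : Type*} (ℓ : ℕ) (x : List (Option (Bool × U))) :
    expand ℓ x = x.flatMap (blockOf ℓ) := by
  rfl

lemma length_blockOf {U : Type*} (ℓ : ℕ) (e : Option (Bool × U)) :
    (blockOf ℓ e).length = ℓ := by
  cases e with
  | none => simp [blockOf]
  | some p => obtain ⟨b, u⟩ := p; simp [blockOf]

lemma length_flatMap_const {A B : Type*} {ℓ : ℕ} {f : A → List B}
    (hf : ∀ a, (f a).length = ℓ) (x : List A) : (x.flatMap f).length = x.length * ℓ := by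
  induction x with
  | nil => simp
  | cons a x ih => simp [List.flatMap_cons, ih, hf, Nat.succ_mul]; omega

lemma getD_flatMap {A B : Type*} {ℓ : ℕ} (f : A → List B)
    (hf : ∀ a, (f a).length = ℓ) (d : B) :
    ∀ (x : List A) (q r : ℕ), r < ℓ →
      (x.flatMap f).getD (q * ℓ + r) d = (x[q]?).elim d (fun a => (f a).getD r d) := by
  intro x
  induction x with
  | nil => intro q r hr; simp
  | cons a x ih =>
    intro q r hr
    cases q with
    | zero =>
      simp only [List.flatMap_cons, Nat.zero_mul, Nat.zero_add]
      rw [List.getD_append _ _ _ _ (by rw [hf]; exact hr)]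
      simp
    | succ q =>
      simp only [List.flatMap_cons]
      have h1 : (q + 1) * ℓ + r = (f a).length + (q * ℓ + r) := by rw [hf]; ring
      rw [h1, List.getD_append_right _ _ _ _ (Nat.le_add_right _ _), Nat.add_sub_cancel_left]
      rw [ih q r hr]
      simp

lemma netCount_append {U : Type*} [DecidableEq U] (x y : List (Option (Bool × U))) (u : U) :
    netCount (x ++ y) u = netCount x u + netCount y u := by
  simp [netCount, List.count_append]
  ring

lemma beq_decEq {α : Type*} (d : DecidableEq α) (x y : α) :
    @BEq.beq α (@instBEqOfDecidableEq α d) x y = decide (x = y) := rfl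

lemma netCount_cons {U : Type*} [DecidableEq U] (e : Option (Bool × U))
    (x : List (Option (Bool × U))) (u : U) :
    netCount (e :: x) u = netCount [e] u + netCount x u := by
  simp [netCount, List.count_cons]
  ring

lemma netCount_single_pair {U : Type*} [DecidableEq U] {ℓ : ℕ} (b' : Bool) (v : U)
    (a m : Fin ℓ) (u : U) :
    netCount [(some (b', (a, v)) : Option (Bool × (Fin ℓ × U)))] (m, u)
      = if a = m then netCount [(some (b', v) : Option (Bool × U))] u else 0 := by
  by_cases ha : a = m
  · subst ha
    simp only [if_pos rfl]
    by_cases hv : v = u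
    · subst hv
      cases b' <;> simp [netCount, List.count_singleton, instBEqProd, beq_decEq]
    · simp [netCount, List.count_singleton, instBEqProd, beq_decEq, hv]
  · simp [netCount, List.count_singleton, instBEqProd, beq_decEq, ha]

lemma netCount_map {U : Type*} [DecidableEq U] {ℓ : ℕ} (b' : Bool) (v : U)
    (l : List (Fin ℓ)) (m : Fin ℓ) (u : U) :
    netCount (l.map fun m' => (some (b', (m', v)) : Option (Bool × (Fin ℓ × U)))) (m, u)
      = (l.count m : ℤ) * netCount [(some (b', v) : Option (Bool × U))] u := by
  induction l with
  | nil => simp [netCount]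
  | cons a l ih =>
    rw [List.map_cons, netCount_cons, ih, List.count_cons, netCount_single_pair]
    by_cases ha : a = m
    · simp [ha]
      ring
    · simp [ha, Ne.symm ha]

lemma netCount_replicate_none {U : Type*} [DecidableEq U] (n : ℕ) (u : U) :
    netCount (List.replicate n (none : Option (Bool × U))) u = 0 := by
  induction n with
  | zero => simp [netCount]
  | succ n ih => rw [List.replicate_succ, netCount_cons, ih]; simp [netCount]

lemma netCount_blockOf {U : Type*} [DecidableEq U] {ℓ : ℕ} (e : Option (Bool × U))
    (m : Fin ℓ) (u : U) : netCount (blockOf ℓ e) (m, u) = netCount [e] u := by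
  cases e with
  | none =>
    show netCount (List.replicate ℓ (none : Option (Bool × (Fin ℓ × U)))) (m, u) = _
    rw [netCount_replicate_none]
    simp [netCount]
  | some p =>
    obtain ⟨b', v⟩ := p
    show netCount ((List.finRange ℓ).map fun m' => (some (b', (m', v)) :
        Option (Bool × (Fin ℓ × U)))) (m, u) = _
    rw [netCount_map, List.count_eq_one_of_mem (List.nodup_finRange ℓ) (List.mem_finRange m)]
    simp

lemma netCount_expand {U : Type*} [DecidableEq U] (ℓ : ℕ) (y : List (Option (Bool × U)))
    (m : Fin ℓ) (u : U) : netCount (expand ℓ y) (m, u) = netCount y u := by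
  induction y with
  | nil => simp [expand, netCount]
  | cons e y ih =>
    have hx : e :: y = [e] ++ y := rfl
    rw [expand_eq] at *
    rw [hx, List.flatMap_append, netCount_append, netCount_append]
    have : [e].flatMap (blockOf ℓ) = blockOf ℓ e := by simp
    rw [this, netCount_blockOf, ih]

lemma take_expand {U : Type*} (ℓ : ℕ) (x : List (Option (Bool × U))) (t : ℕ)
    (ht : t ≤ x.length) : (expand ℓ x).take (t * ℓ) = expand ℓ (x.take t) := by
  rw [expand_eq, expand_eq]
  conv_lhs => rw [← List.take_append_drop t x, List.flatMap_append]
  rw [List.take_left']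
  rw [length_flatMap_const (length_blockOf ℓ)]
  rw [List.length_take, min_eq_left ht]

lemma countDistinct_expand {U : Type*} [Fintype U] [DecidableEq U] (ℓ : ℕ)
    (x : List (Option (Bool × U))) (t : ℕ) (ht : t ≤ x.length) :
    countDistinct (expand ℓ x) (t * ℓ) = ℓ * countDistinct x t := by
  unfold countDistinct
  rw [take_expand ℓ x t ht]
  have hset : (Finset.univ.filter fun p : Fin ℓ × U => 0 < netCount (expand ℓ (x.take t)) p)
      = Finset.univ ×ˢ (Finset.univ.filter fun u : U => 0 < netCount (x.take t) u) := by
    ext ⟨m, u⟩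
    simp [netCount_expand, Finset.mem_product]
  rw [hset, Finset.card_product]
  simp

def hybEntry {U : Type*} (ℓ k : ℕ) :
    Option (Bool × U) → Option (Bool × U) → List (Option (Bool × (Fin ℓ × U)))
  | some p, none => (List.finRange ℓ).map fun m => if m.val < k then none else some (p.1, (m, p.2))
  | e, _ => blockOf ℓ e

def hyb {U : Type*} (ℓ k : ℕ) (x x' : List (Option (Bool × U))) :
    List (Option (Bool × (Fin ℓ × U))) :=
  (x.zip x').flatMap fun p => hybEntry ℓ k p.1 p.2

lemma length_hybEntry {U : Type*} (ℓ k : ℕ) (e e' : Option (Bool × U)) :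
    (hybEntry ℓ k e e').length = ℓ := by
  cases e with
  | none => cases e' <;> simp [hybEntry, blockOf]
  | some p => cases e' <;> simp [hybEntry, length_blockOf]

lemma hyb_zero {U : Type*} (ℓ : ℕ) (x x' : List (Option (Bool × U)))
    (h : x.length = x'.length) : hyb ℓ 0 x x' = expand ℓ x := by
  rw [expand_eq]
  induction x generalizing x' with
  | nil => simp [hyb]
  | cons e x ih =>
    cases x' with
    | nil => simp at h
    | cons e' x' =>
      simp only [hyb, List.zip_cons_cons, List.flatMap_cons, List.flatMap_cons] at *
      rw [ih x' (by simpa using h)]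
      congr 1
      cases e with
      | none => cases e' <;> rfl
      | some p => cases e' <;> simp [hybEntry, blockOf]

lemma hyb_top {U : Type*} (ℓ : ℕ) (x x' : List (Option (Bool × U)))
    (h : x.length = x'.length)
    (hsub : ∀ t : ℕ, x'.getD t none = x.getD t none ∨ x'.getD t none = none) :
    hyb ℓ ℓ x x' = expand ℓ x' := by
  rw [expand_eq]
  induction x generalizing x' with
  | nil => cases x' with
    | nil => simp [hyb]
    | cons e' x' => simp at h
  | cons e x ih =>
    cases x' with
    | nil => simp at h
    | cons e' x' =>
      simp only [hyb, List.zip_cons_cons, List.flatMap_cons] at *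
      rw [ih x' (by simpa using h) (fun t => by simpa using hsub (t + 1))]
      congr 1
      have h0 := hsub 0
      simp only [List.getD_cons_zero] at h0
      cases e with
      | none =>
        rcases h0 with h0 | h0
        · rw [h0]; rfl
        · rw [h0]; rfl
      | some p =>
        rcases h0 with h0 | h0
        · rw [h0]; simp [hybEntry, blockOf]
        · rw [h0]
          simp only [hybEntry, blockOf]
          have : ∀ m : Fin ℓ, (if m.val < ℓ then (none : Option (Bool × (Fin ℓ × U)))
              else some (p.1, (m, p.2))) = none := fun m => if_pos m.isLt
          simp [this, List.eq_replicate_iff]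

lemma getD_map_finRange {β : Type*} {ℓ r : ℕ} (hr : r < ℓ) (f : Fin ℓ → β) (d : β) :
    ((List.finRange ℓ).map f).getD r d = f ⟨r, hr⟩ := by
  rw [List.getD_eq_getElem?_getD, List.getElem?_map]
  rw [List.getElem?_eq_getElem (by simpa using hr)]
  simp

lemma hyb_subNeighbor {U : Type*} (ℓ k : ℕ) (hk : k < ℓ) (x x' : List (Option (Bool × U)))
    (u : U) (hlen : x.length = x'.length)
    (hsub : ∀ t : ℕ, x'.getD t none = x.getD t none ∨
      (x'.getD t none = none ∧ ∃ b : Bool, x.getD t none = some (b, u))) :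
    ItemSubNeighbor (hyb ℓ k x x') (hyb ℓ (k + 1) x x') := by
  have hlen2 : ∀ j, (hyb ℓ j x x').length = (x.zip x').length * ℓ := fun j => by
    unfold hyb
    exact length_flatMap_const (fun p : Option (Bool × U) × Option (Bool × U) =>
      length_hybEntry ℓ j p.1 p.2) _
  refine ⟨by rw [hlen2, hlen2], ⟨(⟨k, hk⟩, u), ?_⟩⟩
  intro t
  have hℓpos : 0 < ℓ := lt_of_le_of_lt (Nat.zero_le k) hk
  obtain ⟨q, r, hr, rfl⟩ : ∃ q r, r < ℓ ∧ t = q * ℓ + r :=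
    ⟨t / ℓ, t % ℓ, Nat.mod_lt _ hℓpos, (Nat.div_add_mod' t ℓ).symm⟩
  unfold hyb
  rw [getD_flatMap (fun p : Option (Bool × U) × Option (Bool × U) => hybEntry ℓ (k + 1) p.1 p.2)
      (fun p => length_hybEntry ℓ (k + 1) p.1 p.2) none (x.zip x') q r hr,
    getD_flatMap (fun p : Option (Bool × U) × Option (Bool × U) => hybEntry ℓ k p.1 p.2)
      (fun p => length_hybEntry ℓ k p.1 p.2) none (x.zip x') q r hr]
  cases hzq : (x.zip x')[q]? with
  | none => left; rfl
  | some p =>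
    obtain ⟨e, e'⟩ := p
    rw [List.getElem?_zip_eq_some] at hzq
    obtain ⟨hxq, hx'q⟩ := hzq
    simp only [Option.elim]
    cases e with
    | none => left; rfl
    | some p =>
      cases e' with
      | some p' => left; rfl
      | none =>
        show ((List.finRange ℓ).map fun m => if m.val < k + 1 then none
              else some (p.1, (m, p.2))).getD r none =
            ((List.finRange ℓ).map fun m => if m.val < k then none
              else some (p.1, (m, p.2))).getD r none ∨
          (((List.finRange ℓ).map fun m => if m.val < k + 1 then none
              else some (p.1, (m, p.2))).getD r none = none ∧
            ∃ b : Bool, ((List.finRange ℓ).map fun m => if m.val < k then none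
              else some (p.1, (m, p.2))).getD r none = some (b, (⟨k, hk⟩, u)))
        rw [getD_map_finRange hr, getD_map_finRange hr]
        have hval : ((⟨r, hr⟩ : Fin ℓ) : ℕ) = r := rfl
        simp only [hval]
        rcases lt_trichotomy r k with h1 | h1 | h1
        · left
          rw [if_pos h1, if_pos (Nat.lt_succ_of_lt h1)]
        · subst h1
          right
          refine ⟨by rw [if_pos (Nat.lt_succ_self r)], ?_⟩
          have := hsub q
          rw [List.getD_eq_getElem?_getD, List.getD_eq_getElem?_getD, hxq, hx'q] at this
          simp only [Option.getD_some] at this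
          rcases this with h | ⟨-, b, hb⟩
          · exact absurd h (by simp)
          · obtain rfl : p = (b, u) := by injection hb
            exact ⟨b, by rw [if_neg (lt_irrefl r)]⟩
        · left
          rw [if_neg (by omega), if_neg (by omega)]

lemma group_dp {X Ω : Type*} [MeasurableSpace Ω] {N : X → X → Prop} {M : X → Measure Ω}
    {ε δ : ℝ} (hε : 0 < ε) (hδ : 0 ≤ δ) (hDP : IsDP N M ε δ) (z : ℕ → X) (n : ℕ)
    (hchain : ∀ k < n, N (z k) (z (k + 1))) (S : Set Ω) (hS : MeasurableSet S) :
    (M (z 0) S).toReal ≤ Real.exp (n * ε) * (M (z n) S).toReal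
      + δ * (Real.exp (n * ε) - 1) / (Real.exp ε - 1) := by
  have hE : (0:ℝ) < Real.exp ε - 1 := by
    have := Real.add_one_lt_exp (ne_of_gt hε)
    linarith
  induction n with
  | zero => simp
  | succ n ih =>
    have h1 := ih (fun k hk => hchain k (Nat.lt_succ_of_lt hk))
    have h2 := hDP (z n) (z (n + 1)) (hchain n (Nat.lt_succ_self n)) S hS
    have hA : (0:ℝ) < Real.exp (n * ε) := Real.exp_pos _
    have hstep : Real.exp ((n + 1 : ℕ) * ε) = Real.exp (n * ε) * Real.exp ε := by
      rw [← Real.exp_add]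
      congr 1
      push_cast
      ring
    calc (M (z 0) S).toReal
        ≤ Real.exp (n * ε) * (M (z n) S).toReal
          + δ * (Real.exp (n * ε) - 1) / (Real.exp ε - 1) := h1
      _ ≤ Real.exp (n * ε) * (Real.exp ε * (M (z (n + 1)) S).toReal + δ)
          + δ * (Real.exp (n * ε) - 1) / (Real.exp ε - 1) := by
          have := mul_le_mul_of_nonneg_left h2 (le_of_lt hA)
          linarith
      _ = Real.exp ((n + 1 : ℕ) * ε) * (M (z (n + 1)) S).toReal
          + δ * (Real.exp ((n + 1 : ℕ) * ε) - 1) / (Real.exp ε - 1) := by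
          rw [hstep]
          field_simp
          ring

lemma getD_expand {U : Type*} (ℓ : ℕ) (x : List (Option (Bool × U))) (q r : ℕ) (hr : r < ℓ) :
    (expand ℓ x).getD (q * ℓ + r) none
      = (x[q]?).elim none (fun e => (blockOf ℓ e).getD r none) := by
  rw [expand_eq]
  exact getD_flatMap _ (length_blockOf ℓ) none x q r hr

lemma getD_blockOf_some {U : Type*} {ℓ : ℕ} (p : Bool × U) {r : ℕ} (hr : r < ℓ) :
    (blockOf ℓ (some p)).getD r none = some (p.1, (⟨r, hr⟩, p.2)) := by
  show ((List.finRange ℓ).map fun m => (some (p.1, (m, p.2)) :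
    Option (Bool × (Fin ℓ × U)))).getD r none = _
  rw [getD_map_finRange hr]

lemma length_expand {U : Type*} (ℓ : ℕ) (x : List (Option (Bool × U))) :
    (expand ℓ x).length = x.length * ℓ := by
  rw [expand_eq]
  exact length_flatMap_const (length_blockOf ℓ) x

/-- Scaling reduction for lower bounds: if `M'` is an `(ε', δ')`-item-level-DP,
`α'`-accurate mechanism for `CountDistinct` on streams of length `T' = ℓT` over
`[ℓ] × U`, and `M` is built by expanding each entry into `ℓ` copies, running `M'`, and
outputting `M(x)[t] = (1/ℓ)·M'(x')[tℓ]`, then: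
(a) `CountDistinct(x')[tℓ] = ℓ·CountDistinct(x)[t]`;
(b) expansions of item-neighbors differ only in entries of at most `ℓ` items;
(c) `M` is `(ℓε', δ'(e^{ℓε'}−1)/(e^{ε'}−1))`-item-level-DP and `(α'/ℓ)`-accurate
on streams of length `T`. -/
theorem scaling_reduction {U : Type*} [Fintype U] [DecidableEq U]
    (ℓ T : ℕ) (hℓ : 1 ≤ ℓ) (ε' δ' α' : ℝ) (hε' : 0 < ε') (hδ' : 0 ≤ δ') (hα' : 0 ≤ α')
    (M' : List (Option (Bool × (Fin ℓ × U))) → Measure (ℕ → ℝ))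
    (hprob : ∀ x', IsProbabilityMeasure (M' x'))
    (hDP : IsDP ItemNeighbor M' ε' δ')
    (hAcc : Accurate M' (T * ℓ) α') :
    (∀ (x : List (Option (Bool × U))) (t : ℕ), t ≤ x.length →
        countDistinct (expand ℓ x) (t * ℓ) = ℓ * countDistinct x t)
    ∧ (∀ x x' : List (Option (Bool × U)), ItemNeighbor x x' →
        ∃ S : Finset (Fin ℓ × U), S.card ≤ ℓ ∧ ∀ t : ℕ,
          (expand ℓ x).getD t none ≠ (expand ℓ x').getD t none →
            ((∃ b v, (expand ℓ x).getD t none = some (b, v) ∧ v ∈ S) ∨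
             (∃ b v, (expand ℓ x').getD t none = some (b, v) ∧ v ∈ S)))
    ∧ (∀ x x' : List (Option (Bool × U)), x.length = T → x'.length = T →
        ItemNeighbor x x' → ∀ S : Set (ℕ → ℝ), MeasurableSet S →
          (((M' (expand ℓ x)).map (fun a t => a (t * ℓ) / (ℓ : ℝ))) S).toReal ≤
            Real.exp (ℓ * ε') *
              (((M' (expand ℓ x')).map (fun a t => a (t * ℓ) / (ℓ : ℝ))) S).toReal
            + δ' * (Real.exp (ℓ * ε') - 1) / (Real.exp ε' - 1))
    ∧ Accurate (fun x => (M' (expand ℓ x)).map (fun a t => a (t * ℓ) / (ℓ : ℝ))) T (α' / ℓ) := by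
  have hℓpos : 0 < ℓ := hℓ
  have hf : Measurable (fun a : ℕ → ℝ => fun t : ℕ => a (t * ℓ) / (ℓ : ℝ)) :=
    measurable_pi_lambda _ fun t => (measurable_pi_apply _).div_const _
  refine ⟨fun x t ht => countDistinct_expand ℓ x t ht, ?_, ?_, ?_⟩
  · -- part (b)
    intro x x' hnb
    rcases hnb with ⟨hlen, u, hu⟩ | ⟨hlen, u, hu⟩
    · refine ⟨Finset.univ.image (fun m : Fin ℓ => (m, u)),
        Finset.card_image_le.trans (by simp), ?_⟩
      intro t hd
      obtain ⟨q, r, hr, rfl⟩ : ∃ q r, r < ℓ ∧ t = q * ℓ + r :=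
        ⟨t / ℓ, t % ℓ, Nat.mod_lt _ hℓpos, (Nat.div_add_mod' t ℓ).symm⟩
      rw [getD_expand ℓ x q r hr, getD_expand ℓ x' q r hr] at hd ⊢
      cases hq : x[q]? with
      | none =>
        have hqlt : x.length ≤ q := by
          by_contra h
          rw [List.getElem?_eq_none_iff] at hq
          omega
        have hq' : x'[q]? = none := List.getElem?_eq_none (by omega)
        rw [hq, hq'] at hd
        simp at hd
      | some e =>
        have hqlt : q < x.length := by
          by_contra h
          rw [List.getElem?_eq_none (by omega)] at hq
          cases hq
        cases hq' : x'[q]? with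
        | none =>
          rw [List.getElem?_eq_none_iff] at hq'
          omega
        | some e' =>
          simp only [hq, hq', Option.elim] at hd ⊢
          have hgd := hu q
          rw [List.getD_eq_getElem?_getD, List.getD_eq_getElem?_getD, hq, hq'] at hgd
          simp only [Option.getD_some] at hgd
          rcases hgd with hgd | ⟨rfl, b, rfl⟩
          · exact absurd (by rw [hgd]) hd
          · exact Or.inl ⟨b, (⟨r, hr⟩, u), getD_blockOf_some (b, u) hr, by simp⟩
    · refine ⟨Finset.univ.image (fun m : Fin ℓ => (m, u)),
        Finset.card_image_le.trans (by simp), ?_⟩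
      intro t hd
      obtain ⟨q, r, hr, rfl⟩ : ∃ q r, r < ℓ ∧ t = q * ℓ + r :=
        ⟨t / ℓ, t % ℓ, Nat.mod_lt _ hℓpos, (Nat.div_add_mod' t ℓ).symm⟩
      rw [getD_expand ℓ x q r hr, getD_expand ℓ x' q r hr] at hd ⊢
      cases hq : x'[q]? with
      | none =>
        have hqlt : x'.length ≤ q := by
          by_contra h
          rw [List.getElem?_eq_none_iff] at hq
          omega
        have hq' : x[q]? = none := List.getElem?_eq_none (by omega)
        rw [hq, hq'] at hd
        simp at hd
      | some e =>
        have hqlt : q < x'.length := by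
          by_contra h
          rw [List.getElem?_eq_none (by omega)] at hq
          cases hq
        cases hq' : x[q]? with
        | none =>
          rw [List.getElem?_eq_none_iff] at hq'
          omega
        | some e' =>
          simp only [hq, hq', Option.elim] at hd ⊢
          have hgd := hu q
          rw [List.getD_eq_getElem?_getD, List.getD_eq_getElem?_getD, hq, hq'] at hgd
          simp only [Option.getD_some] at hgd
          rcases hgd with hgd | ⟨rfl, b, rfl⟩
          · exact absurd (by rw [hgd]) hd
          · exact Or.inr ⟨b, (⟨r, hr⟩, u), getD_blockOf_some (b, u) hr, by simp⟩
  · -- part (c)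
    intro x x' hx hx' hnb S hS
    rw [Measure.map_apply hf hS, Measure.map_apply hf hS]
    rcases hnb with ⟨hlen, u, hu⟩ | ⟨hlen, u, hu⟩
    · have hch : ∀ k < ℓ, ItemNeighbor (hyb ℓ k x x') (hyb ℓ (k + 1) x x') :=
        fun k hk => Or.inl (hyb_subNeighbor ℓ k hk x x' u hlen hu)
      have hgp := group_dp hε' hδ' hDP (fun k => hyb ℓ k x x') ℓ hch _ (hf hS)
      beta_reduce at hgp
      rw [show hyb ℓ 0 x x' = expand ℓ x from hyb_zero ℓ x x' hlen,
        show hyb ℓ ℓ x x' = expand ℓ x' from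
          hyb_top ℓ x x' hlen (fun t => (hu t).imp id And.left)] at hgp
      exact hgp
    · have hch : ∀ k < ℓ, ItemNeighbor (hyb ℓ (ℓ - k) x' x) (hyb ℓ (ℓ - (k + 1)) x' x) := by
        intro k hk
        have h1 : ℓ - k = (ℓ - (k + 1)) + 1 := by omega
        rw [h1]
        exact Or.inr (hyb_subNeighbor ℓ (ℓ - (k + 1)) (by omega) x' x u hlen hu)
      have hgp := group_dp hε' hδ' hDP (fun k => hyb ℓ (ℓ - k) x' x) ℓ hch _ (hf hS)
      beta_reduce at hgp
      simp only [Nat.sub_zero, Nat.sub_self] at hgp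
      rw [show hyb ℓ ℓ x' x = expand ℓ x from
          hyb_top ℓ x' x hlen (fun t => (hu t).imp id And.left),
        show hyb ℓ 0 x' x = expand ℓ x' from hyb_zero ℓ x' x hlen] at hgp
      exact hgp
  · -- part (d): accuracy
    intro x hxT
    have hlenx : (expand ℓ x).length = T * ℓ := by rw [length_expand, hxT]
    refine le_trans (hAcc (expand ℓ x) hlenx) ?_
    refine le_trans (measure_mono ?_) (Measure.le_map_apply hf.aemeasurable _)
    intro a ha
    simp only [Set.mem_setOf_eq, Set.mem_preimage] at ha ⊢
    intro t h1t htT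
    have h1 : 1 ≤ t * ℓ := Nat.mul_le_mul h1t hℓ
    have h2 : t * ℓ ≤ T * ℓ := Nat.mul_le_mul_right _ htT
    have h3 := ha (t * ℓ) h1 h2
    rw [countDistinct_expand ℓ x t (le_of_le_of_eq htT hxT.symm)] at h3
    have hℓR : (0:ℝ) < (ℓ : ℝ) := by exact_mod_cast hℓpos
    have heq : a (t * ℓ) / (ℓ : ℝ) - (countDistinct x t : ℝ)
        = (a (t * ℓ) - ((ℓ * countDistinct x t : ℕ) : ℝ)) / (ℓ : ℝ) := by
      push_cast
      field_simp
    rw [heq, abs_div, abs_of_pos hℓR]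
    gcongr
end
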